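/- arXiv:1304.6562 — 6 statements merged into one kernel-verified Lean document; each statement's English description precedes it below -/
import Mathlib

section
/- Property (M2): Let n ≥ 1, let a < b be real numbers (possibly ±∞), and let A : (a,b) → ℝ^{n×n} be a continuous matrix-valued function that is cooperative, i.e. for every t ∈ (a,b) and all indices i ≠ j, the off-diagonal entry A(t)_{ij} is nonnegative. Let x : (a,b) → ℝⁿ be differentiable with x'(t) = A(t) x(t) for all t ∈ (a,b). If t₀ ∈ (a,b) and every coordinate of x(t₀) is strictly positive, then for every t ∈ (t₀, b) every coordinate of x(t) is strictly positive. -/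
/-!
On a compact subinterval the diagonal entries `A(t)ᵢᵢ` are bounded below by some `-M`. As long as
`x` stays in the nonnegative orthant, cooperativity gives `xᵢ' ≥ Aᵢᵢ xᵢ ≥ -M xᵢ`, so `e^{Mt} xᵢ(t)`
is nondecreasing and `xᵢ` cannot reach `0`. Applied at the first time some coordinate would vanish,
this gives a contradiction.
-/

open Matrix Set

theorem Matrix.diag_mul_le_mulVec_apply {ι R : Type*} [Fintype ι] [Semiring R] [PartialOrder R]
    [IsOrderedRing R] {A : Matrix ι ι R} {v : ι → R} {i : ι}
    (hA : ∀ j, j ≠ i → 0 ≤ A i j) (hv : ∀ j, 0 ≤ v j) : A i i * v i ≤ (A *ᵥ v) i := by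
  classical
  rw [mulVec, dotProduct, ← Finset.add_sum_erase _ _ (Finset.mem_univ i)]
  refine le_add_of_nonneg_right (Finset.sum_nonneg fun j hj => ?_)
  exact mul_nonneg (hA j (Finset.ne_of_mem_erase hj)) (hv j)

theorem monotoneOn_exp_mul_of_neg_mul_le_deriv {f f' : ℝ → ℝ} {M a b : ℝ}
    (hc : ContinuousOn f (Icc a b)) (hf : ∀ u ∈ Ioo a b, HasDerivAt f (f' u) u)
    (hf' : ∀ u ∈ Ioo a b, -M * f u ≤ f' u) :
    MonotoneOn (fun u => Real.exp (M * u) * f u) (Icc a b) := by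
  refine monotoneOn_of_hasDerivWithinAt_nonneg (f' := fun u =>
    Real.exp (M * u) * M * f u + Real.exp (M * u) * f' u) (convex_Icc a b)
    ((Real.continuous_exp.comp (continuous_const_mul M)).continuousOn.mul hc) (fun u hu => ?_)
    (fun u hu => ?_) <;> rw [interior_Icc] at hu
  · have hexp : HasDerivAt (fun u => Real.exp (M * u)) (Real.exp (M * u) * M) u := by
      simpa using ((hasDerivAt_id u).const_mul M).exp
    exact (hexp.mul (hf u hu)).hasDerivWithinAt
  · have := mul_le_mul_of_nonneg_left (hf' u hu) (Real.exp_pos (M * u)).le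
    linarith

theorem ContinuousOn.mapsTo_of_forall_Ico {X : Type*} [TopologicalSpace X] {g : ℝ → X} {s : Set X}
    {t₀ t₁ : ℝ} (hg : ContinuousOn g (Icc t₀ t₁)) (hs : IsOpen s) (h₀ : g t₀ ∈ s)
    (hstep : ∀ T ∈ Ioc t₀ t₁, (∀ u ∈ Ico t₀ T, g u ∈ s) → g T ∈ s) :
    MapsTo g (Icc t₀ t₁) s := by
  by_contra hmaps
  set Z := Icc t₀ t₁ ∩ g ⁻¹' sᶜ
  have hZ : Z.Nonempty := by
    simp only [MapsTo, not_forall] at hmaps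
    obtain ⟨t, ht, hgt⟩ := hmaps
    exact ⟨t, ht, hgt⟩
  have hbdd : BddBelow Z := ⟨t₀, fun u hu => hu.1.1⟩
  have hτ : sInf Z ∈ Z :=
    (hg.preimage_isClosed_of_isClosed isClosed_Icc hs.isClosed_compl).csInf_mem hZ hbdd
  have hτ₀ : t₀ ≠ sInf Z := fun h => hτ.2 (h ▸ h₀)
  refine hτ.2 (hstep _ ⟨lt_of_le_of_ne hτ.1.1 hτ₀, hτ.1.2⟩ fun u hu => ?_)
  by_contra hgu
  exact notMem_of_lt_csInf hu.2 hbdd ⟨⟨hu.1, hu.2.le.trans hτ.1.2⟩, hgu⟩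

section Cooperative

variable {ι : Type*} [Fintype ι] {A : ℝ → Matrix ι ι ℝ} {x : ℝ → ι → ℝ} {t₀ t₁ : ℝ}

theorem pos_of_cooperative_of_nonneg_on_Ioo {T : ℝ} (hT : t₀ ≤ T) {i : ι}
    (hAc : ContinuousOn (fun t => A t i i) (Icc t₀ T))
    (hcoop : ∀ t ∈ Ioo t₀ T, ∀ j, j ≠ i → 0 ≤ A t i j)
    (hx : ∀ t ∈ Icc t₀ T, HasDerivAt x (A t *ᵥ x t) t)
    (hx₀ : 0 < x t₀ i) (hnonneg : ∀ u ∈ Ioo t₀ T, ∀ j, 0 ≤ x u j) : 0 < x T i := by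
  obtain ⟨M, hM⟩ := isCompact_Icc.exists_bound_of_continuousOn hAc
  have hxi : ∀ t ∈ Icc t₀ T, HasDerivAt (fun s => x s i) ((A t *ᵥ x t) i) t :=
    fun t ht => hasDerivAt_pi.mp (hx t ht) i
  have hmono := monotoneOn_exp_mul_of_neg_mul_le_deriv (M := M)
    (fun t ht => (hxi t ht).continuousAt.continuousWithinAt)
    (fun t ht => hxi t (Ioo_subset_Icc_self ht)) fun t ht => by
      have hdiag : -M ≤ A t i i := (abs_le.mp (hM t (Ioo_subset_Icc_self ht))).1
      calc -M * x t i ≤ A t i i * x t i := mul_le_mul_of_nonneg_right hdiag (hnonneg t ht i)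
        _ ≤ (A t *ᵥ x t) i := diag_mul_le_mulVec_apply (hcoop t ht) (hnonneg t ht)
  have hle := hmono (left_mem_Icc.mpr hT) (right_mem_Icc.mpr hT) hT
  exact pos_of_mul_pos_right ((mul_pos (Real.exp_pos _) hx₀).trans_le hle) (Real.exp_pos _).le

theorem pos_of_cooperative_on_Icc (hAc : ContinuousOn A (Icc t₀ t₁))
    (hcoop : ∀ t ∈ Icc t₀ t₁, ∀ i j, i ≠ j → 0 ≤ A t i j)
    (hx : ∀ t ∈ Icc t₀ t₁, HasDerivAt x (A t *ᵥ x t) t) (hx₀ : ∀ i, 0 < x t₀ i) :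
    ∀ t ∈ Icc t₀ t₁, ∀ i, 0 < x t i := by
  have hmaps : MapsTo x (Icc t₀ t₁) (univ.pi fun _ => Ioi 0) := by
    refine ContinuousOn.mapsTo_of_forall_Ico (fun t ht => (hx t ht).continuousAt.continuousWithinAt)
      (isOpen_set_pi finite_univ fun _ _ => isOpen_Ioi) (by simpa using hx₀) fun T hT hpos => ?_
    have hsub : Icc t₀ T ⊆ Icc t₀ t₁ := Icc_subset_Icc_right hT.2
    simp only [mem_univ_pi, mem_Ioi] at hpos ⊢
    exact fun i => pos_of_cooperative_of_nonneg_on_Ioo hT.1.le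
      ((continuous_apply_apply i i).comp_continuousOn (hAc.mono hsub))
      (fun t ht j hj => hcoop t (hsub (Ioo_subset_Icc_self ht)) i j hj.symm)
      (fun t ht => hx t (hsub ht)) (hx₀ i) fun u hu j => (hpos u (Ioo_subset_Ico_self hu) j).le
  intro t ht
  simpa using hmaps ht

end Cooperative

theorem cooperative_M2_general {n : ℕ} (a b : EReal)
    (A : ℝ → Matrix (Fin n) (Fin n) ℝ)
    (hAcont : ContinuousOn A {t : ℝ | a < (t : EReal) ∧ (t : EReal) < b})
    (hcoop : ∀ t : ℝ, a < (t : EReal) → (t : EReal) < b →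
      ∀ i j : Fin n, i ≠ j → 0 ≤ A t i j)
    (x : ℝ → Fin n → ℝ)
    (hx : ∀ t : ℝ, a < (t : EReal) → (t : EReal) < b →
      HasDerivAt x (A t *ᵥ x t) t)
    (t₀ : ℝ) (ht₀a : a < (t₀ : EReal))
    (hpos : ∀ i, 0 < x t₀ i) :
    ∀ t : ℝ, t₀ < t → (t : EReal) < b → ∀ i, 0 < x t i := by
  intro t₁ ht₀t₁ ht₁b
  have hIcc : ∀ u ∈ Icc t₀ t₁, a < (u : EReal) ∧ (u : EReal) < b := fun u hu =>
    ⟨ht₀a.trans_le (EReal.coe_le_coe_iff.mpr hu.1), (EReal.coe_le_coe_iff.mpr hu.2).trans_lt ht₁b⟩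
  exact pos_of_cooperative_on_Icc (hAcont.mono hIcc)
    (fun t ht => hcoop t (hIcc t ht).1 (hIcc t ht).2) (fun t ht => hx t (hIcc t ht).1 (hIcc t ht).2) hpos t₁ ⟨ht₀t₁.le, le_rfl⟩

/-- Property (M2): for a continuous cooperative linear system `x' = A(t) x` on an open
interval `(a, b)` (with `a`, `b` possibly `±∞`, hence taken in `EReal`), any solution which
has all coordinates strictly positive at some time `t₀` keeps all coordinates strictly
positive for all later times in the interval. -/
theorem cooperative_M2 {n : ℕ} (hn : 1 ≤ n) (a b : EReal) (hab : a < b)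
    (A : ℝ → Matrix (Fin n) (Fin n) ℝ)
    (hAcont : ContinuousOn A {t : ℝ | a < (t : EReal) ∧ (t : EReal) < b})
    (hcoop : ∀ t : ℝ, a < (t : EReal) → (t : EReal) < b →
      ∀ i j : Fin n, i ≠ j → 0 ≤ A t i j)
    (x : ℝ → Fin n → ℝ)
    (hx : ∀ t : ℝ, a < (t : EReal) → (t : EReal) < b →
      HasDerivAt x (A t *ᵥ x t) t)
    (t₀ : ℝ) (ht₀a : a < (t₀ : EReal)) (ht₀b : (t₀ : EReal) < b)
    (hpos : ∀ i, 0 < x t₀ i) :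
    ∀ t : ℝ, t₀ < t → (t : EReal) < b → ∀ i, 0 < x t i :=
  cooperative_M2_general a b A hAcont hcoop x hx t₀ ht₀a hpos
end

section
/- Property (M1): Let n ≥ 1, let a < b be real numbers (possibly ±∞), and let A : (a,b) → ℝ^{n×n} be a continuous matrix-valued function that is cooperative, i.e. for every t ∈ (a,b) and all indices i ≠ j, the off-diagonal entry A(t)_{ij} is nonnegative. Let x : (a,b) → ℝⁿ be differentiable with x'(t) = A(t) x(t) for all t ∈ (a,b). If t₀ ∈ (a,b) and every coordinate of x(t₀) is nonnegative, then for every t ∈ (t₀, b) every coordinate of x(t) is nonnegative. -/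
open Matrix Set Filter Asymptotics

/-! The energy `V t = ∑ i, (min (x t i) 0) ^ 2` measures how far `x t` lies outside the positive
cone. It is `C¹` and `V' = 2 ∑ i, min (x i) 0 * (A x) i`; in that sum the off-diagonal terms
`min (x i) 0 * A i j * x j` are at most `A i j * min (x i) 0 * min (x j) 0` because `A i j ≥ 0`,
so on a compact interval, where `|A i j| ≤ K`, one gets `V' ≤ 2 n K V`. Since `V t₀ = 0`,
Grönwall's inequality forces `V = 0` afterwards. -/

lemma abs_min_zero_sq_sub_le (s y : ℝ) :
    |min y 0 ^ 2 - min s 0 ^ 2 - (y - s) * (2 * min s 0)| ≤ (y - s) ^ 2 := by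
  rw [abs_le]
  rcases le_total s 0 with hs | hs <;> rcases le_total y 0 with hy | hy <;>
    simp only [min_eq_left, min_eq_right, hs, hy] <;> constructor <;> nlinarith

lemma hasDerivAt_min_zero_sq (s : ℝ) : HasDerivAt (fun u : ℝ => min u 0 ^ 2) (2 * min s 0) s := by
  rw [hasDerivAt_iff_isLittleO]
  refine IsBigO.trans_isLittleO ?_ (isLittleO_pow_sub_sub s one_lt_two)
  refine IsBigO.of_bound 1 (Eventually.of_forall fun y => ?_)
  simpa [Real.norm_eq_abs, sq_abs] using abs_min_zero_sq_sub_le s y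

lemma sum_min_zero_sq_nonpos_iff {ι : Type*} [Fintype ι] (v : ι → ℝ) :
    ∑ i, min (v i) 0 ^ 2 ≤ 0 ↔ ∀ i, 0 ≤ v i := by
  have h0 : 0 ≤ ∑ i, min (v i) 0 ^ 2 := by positivity
  rw [h0.ge_iff_eq', Finset.sum_eq_zero_iff_of_nonneg fun i _ => sq_nonneg _]
  simp

lemma HasDerivAt.sum_min_zero_sq {ι : Type*} [Fintype ι] {x : ℝ → ι → ℝ} {x' : ι → ℝ} {t : ℝ}
    (hx : HasDerivAt x x' t) :
    HasDerivAt (fun s => ∑ i, min (x s i) 0 ^ 2) (2 * ∑ i, min (x t i) 0 * x' i) t := by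
  rw [Finset.mul_sum]
  refine HasDerivAt.fun_sum fun i _ => ?_
  simpa only [Function.comp_def, mul_assoc] using
    (hasDerivAt_min_zero_sq (x t i)).comp t (hasDerivAt_pi.1 hx i)

lemma sum_min_zero_mul_mulVec_le {ι : Type*} [Fintype ι] {M : Matrix ι ι ℝ} {K : ℝ}
    (hM : ∀ i j, i ≠ j → 0 ≤ M i j) (hK : ∀ i j, |M i j| ≤ K) (v : ι → ℝ) :
    ∑ i, min (v i) 0 * (M *ᵥ v) i ≤ Fintype.card ι * K * ∑ i, min (v i) 0 ^ 2 := by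
  have hterm : ∀ i j, min (v i) 0 * (M i j * v j) ≤
      K * (min (v i) 0 ^ 2 + min (v j) 0 ^ 2) / 2 := by
    intro i j
    have hMK := (le_abs_self (M i j)).trans (hK i j)
    have hK0 := (abs_nonneg (M i j)).trans (hK i j)
    by_cases hij : i = j
    · subst hij
      rcases le_total (v i) 0 with h | h <;> simp only [min_eq_left, min_eq_right, h] <;> nlinarith
    · have hMij := hM i j hij
      have hvj : min (v j) 0 ≤ v j := min_le_left _ _
      have hmi : min (v i) 0 ≤ 0 := min_le_right _ _
      have hmj : min (v j) 0 ≤ 0 := min_le_right _ _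
      nlinarith [mul_le_mul_of_nonpos_left hvj hmi, mul_nonneg_of_nonpos_of_nonpos hmi hmj,
        sq_nonneg (min (v i) 0 - min (v j) 0)]
  calc ∑ i, min (v i) 0 * (M *ᵥ v) i
      = ∑ i, ∑ j, min (v i) 0 * (M i j * v j) := by simp [mulVec, dotProduct, Finset.mul_sum]
    _ ≤ ∑ i, ∑ j, K * (min (v i) 0 ^ 2 + min (v j) 0 ^ 2) / 2 :=
      Finset.sum_le_sum fun i _ => Finset.sum_le_sum fun j _ => hterm i j
    _ = Fintype.card ι * K * ∑ i, min (v i) 0 ^ 2 := by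
      simp only [mul_add, add_div, Finset.sum_add_distrib, ← Finset.sum_div, ← Finset.mul_sum,
        Finset.sum_const, Finset.card_univ, nsmul_eq_mul]
      ring

lemma nonpos_of_hasDerivWithinAt_le_mul {V V' : ℝ → ℝ} {C a b : ℝ}
    (hV : ContinuousOn V (Icc a b)) (hV' : ∀ t ∈ Ico a b, HasDerivWithinAt V (V' t) (Ici t) t)
    (ha : V a ≤ 0) (hle : ∀ t ∈ Ico a b, V' t ≤ C * V t) : ∀ t ∈ Icc a b, V t ≤ 0 := by
  intro t ht
  simpa [gronwallBound_ε0_δ0] using le_gronwallBound_of_liminf_deriv_right_le hV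
    (fun s hs _ hr => (hV' s hs).liminf_right_slope_le hr) ha
    (fun s hs => (hle s hs).trans_eq (add_zero _).symm) t ht

lemma IsCompact.exists_bound_of_continuousOn_matrix {α m n : Type*} [TopologicalSpace α]
    [Fintype m] [Fintype n] {s : Set α} (hs : IsCompact s) {A : α → Matrix m n ℝ}
    (hA : ContinuousOn A s) : ∃ K, ∀ t ∈ s, ∀ i j, |A t i j| ≤ K := by
  let _ := Matrix.normedAddCommGroup (m := m) (n := n) (α := ℝ)
  obtain ⟨K, hK⟩ := hs.exists_bound_of_continuousOn hA
  exact ⟨K, fun t ht i j => (norm_entry_le_entrywise_sup_norm (A t)).trans (hK t ht)⟩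

theorem cooperative_M1_general {n : ℕ} (a b : EReal)
    (A : ℝ → Matrix (Fin n) (Fin n) ℝ)
    (hAcont : ContinuousOn A {t : ℝ | a < (t : EReal) ∧ (t : EReal) < b})
    (hcoop : ∀ t : ℝ, a < (t : EReal) → (t : EReal) < b →
      ∀ i j : Fin n, i ≠ j → 0 ≤ A t i j)
    (x : ℝ → Fin n → ℝ)
    (hx : ∀ t : ℝ, a < (t : EReal) → (t : EReal) < b →
      HasDerivAt x (A t *ᵥ x t) t)
    (t₀ : ℝ) (ht₀a : a < (t₀ : EReal))
    (hnn : ∀ i, 0 ≤ x t₀ i) :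
    ∀ t : ℝ, t₀ < t → (t : EReal) < b → ∀ i, 0 ≤ x t i := by
  intro t₁ ht₀t₁ ht₁b
  have hI : Icc t₀ t₁ ⊆ {t : ℝ | a < (t : EReal) ∧ (t : EReal) < b} := fun t ht =>
    ⟨ht₀a.trans_le (EReal.coe_le_coe_iff.2 ht.1), (EReal.coe_le_coe_iff.2 ht.2).trans_lt ht₁b⟩
  obtain ⟨K, hK⟩ := isCompact_Icc.exists_bound_of_continuousOn_matrix (hAcont.mono hI)
  have hV : ∀ t ∈ Icc t₀ t₁, HasDerivAt (fun s => ∑ j, min (x s j) 0 ^ 2)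
      (2 * ∑ j, min (x t j) 0 * (A t *ᵥ x t) j) t :=
    fun t ht => (hx t (hI ht).1 (hI ht).2).sum_min_zero_sq
  have hV' : ∀ t ∈ Icc t₀ t₁, 2 * ∑ j, min (x t j) 0 * (A t *ᵥ x t) j ≤
      2 * (n * K) * ∑ j, min (x t j) 0 ^ 2 := fun t ht => by
    have := sum_min_zero_mul_mulVec_le (hcoop t (hI ht).1 (hI ht).2) (hK t ht) (x t)
    rw [Fintype.card_fin] at this
    linarith
  have hV_nonpos := nonpos_of_hasDerivWithinAt_le_mul
    (fun t ht => (hV t ht).continuousAt.continuousWithinAt)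
    (fun t ht => (hV t (Ico_subset_Icc_self ht)).hasDerivWithinAt)
    ((sum_min_zero_sq_nonpos_iff _).2 hnn) (fun t ht => hV' t (Ico_subset_Icc_self ht))
  exact (sum_min_zero_sq_nonpos_iff _).1 (hV_nonpos t₁ ⟨ht₀t₁.le, le_rfl⟩)

/-- Property (M1): for a continuous cooperative linear system `x' = A(t) x` on an open
interval `(a, b)` (with `a`, `b` possibly `±∞`, hence taken in `EReal`), any solution which
has all coordinates nonnegative at some time `t₀` keeps all coordinates nonnegative for all
later times in the interval. -/
theorem cooperative_M1 {n : ℕ} (hn : 1 ≤ n) (a b : EReal) (hab : a < b)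
    (A : ℝ → Matrix (Fin n) (Fin n) ℝ)
    (hAcont : ContinuousOn A {t : ℝ | a < (t : EReal) ∧ (t : EReal) < b})
    (hcoop : ∀ t : ℝ, a < (t : EReal) → (t : EReal) < b →
      ∀ i j : Fin n, i ≠ j → 0 ≤ A t i j)
    (x : ℝ → Fin n → ℝ)
    (hx : ∀ t : ℝ, a < (t : EReal) → (t : EReal) < b →
      HasDerivAt x (A t *ᵥ x t) t)
    (t₀ : ℝ) (ht₀a : a < (t₀ : EReal)) (ht₀b : (t₀ : EReal) < b)
    (hnn : ∀ i, 0 ≤ x t₀ i) :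
    ∀ t : ℝ, t₀ < t → (t : EReal) < b → ∀ i, 0 ≤ x t i :=
  cooperative_M1_general a b A hAcont hcoop x hx t₀ ht₀a hnn
end

section
/- Key differential inequality for the coordinate product: Let n ≥ 1, let a < b be real numbers (possibly ±∞), and let A : (a,b) → ℝ^{n×n} be a continuous matrix-valued function that is cooperative, i.e. for every t ∈ (a,b) and all indices i ≠ j, the off-diagonal entry A(t)_{ij} is nonnegative. Let x : (a,b) → ℝⁿ be differentiable with x'(t) = A(t) x(t) for all t ∈ (a,b), and define ξ(t) := ∏_{i=1}^n x_i(t). Then ξ is differentiable, and at every t ∈ (a,b) such that all coordinates of x(t) are nonnegative, one has ξ'(t) ≥ trace(A(t)) · ξ(t). -/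
/-!
By the product rule `ξ' = ∑ᵢ (A x)ᵢ ∏_{j ≠ i} xⱼ`. Where `x ≥ 0`, cooperativity gives
`(A x)ᵢ ≥ Aᵢᵢ xᵢ` and the cofactors `∏_{j ≠ i} xⱼ` are nonnegative, so each summand is at least
`Aᵢᵢ ξ`.
-/

open Matrix Finset

/-- The system `x' = A(t) x` is cooperative exactly when every `A t` is Metzler. -/
def Matrix.IsMetzler {ι R : Type*} [Zero R] [LE R] (M : Matrix ι ι R) : Prop :=
  ∀ i j, i ≠ j → 0 ≤ M i j

section Metzler

variable {ι R : Type*} [Fintype ι] [DecidableEq ι]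

theorem Matrix.IsMetzler.diag_mul_le_mulVec [Semiring R] [PartialOrder R] [IsOrderedRing R]
    {M : Matrix ι ι R} (hM : M.IsMetzler) {x : ι → R} (hx : 0 ≤ x) (i : ι) :
    M i i * x i ≤ (M *ᵥ x) i := by
  have hrest : 0 ≤ ∑ j ∈ univ.erase i, M i j * x j :=
    sum_nonneg fun j hj => mul_nonneg (hM i j (ne_of_mem_erase hj).symm) (hx j)
  calc M i i * x i ≤ M i i * x i + ∑ j ∈ univ.erase i, M i j * x j := le_add_of_nonneg_right hrest
    _ = (M *ᵥ x) i := add_sum_erase univ (fun j => M i j * x j) (mem_univ i)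

theorem Matrix.IsMetzler.trace_mul_prod_le [CommSemiring R] [PartialOrder R] [IsOrderedRing R]
    {M : Matrix ι ι R} (hM : M.IsMetzler) {x : ι → R} (hx : 0 ≤ x) :
    M.trace * ∏ i, x i ≤ ∑ i, (M *ᵥ x) i * ∏ j ∈ univ.erase i, x j := by
  rw [trace, sum_mul]
  refine sum_le_sum fun i _ => ?_
  calc M i i * ∏ j, x j = M i i * x i * ∏ j ∈ univ.erase i, x j := by
        rw [← mul_prod_erase univ x (mem_univ i), mul_assoc]
    _ ≤ (M *ᵥ x) i * ∏ j ∈ univ.erase i, x j :=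
        mul_le_mul_of_nonneg_right (hM.diag_mul_le_mulVec hx i) (prod_nonneg fun j _ => hx j)

end Metzler

theorem HasDerivAt.prod_apply {ι : Type*} [Fintype ι] [DecidableEq ι] {x : ℝ → ι → ℝ}
    {x' : ι → ℝ} {t : ℝ} (hx : HasDerivAt x x' t) :
    HasDerivAt (fun s => ∏ i, x s i) (∑ i, x' i * ∏ j ∈ univ.erase i, x t j) t := by
  simpa only [smul_eq_mul, mul_comm] using
    HasDerivAt.fun_finsetProd (u := univ) fun i _ => hasDerivAt_pi.mp hx i

theorem cooperative_product_diff_ineq_general {n : ℕ} (a b : EReal)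
    (A : ℝ → Matrix (Fin n) (Fin n) ℝ)
    (hcoop : ∀ t : ℝ, a < (t : EReal) → (t : EReal) < b →
      ∀ i j : Fin n, i ≠ j → 0 ≤ A t i j)
    (x : ℝ → Fin n → ℝ)
    (hx : ∀ t : ℝ, a < (t : EReal) → (t : EReal) < b →
      HasDerivAt x (A t *ᵥ x t) t)
    (ξ : ℝ → ℝ) (hξ : ξ = fun t => ∏ i, x t i) :
    ∀ t : ℝ, a < (t : EReal) → (t : EReal) < b →
      DifferentiableAt ℝ ξ t ∧
      ((∀ i, 0 ≤ x t i) → Matrix.trace (A t) * ξ t ≤ deriv ξ t) := by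
  intro t hta htb
  have hξ' := (hx t hta htb).prod_apply
  rw [← hξ] at hξ'
  refine ⟨hξ'.differentiableAt, fun hpos => ?_⟩
  rw [hξ'.deriv, hξ]
  exact IsMetzler.trace_mul_prod_le (hcoop t hta htb) hpos

/-- Key differential inequality: for a continuous cooperative linear system `x' = A(t) x`
on an open interval `(a, b)` (with `a`, `b` possibly `±∞`, hence taken in `EReal`), the
product `ξ(t) = ∏ i, xᵢ(t)` of the coordinates of a solution is differentiable on the
interval, and at every point of the interval where all coordinates of `x(t)` are
nonnegative one has `ξ'(t) ≥ trace (A t) * ξ t`. -/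
theorem cooperative_product_diff_ineq {n : ℕ} (hn : 1 ≤ n) (a b : EReal) (hab : a < b)
    (A : ℝ → Matrix (Fin n) (Fin n) ℝ)
    (hAcont : ContinuousOn A {t : ℝ | a < (t : EReal) ∧ (t : EReal) < b})
    (hcoop : ∀ t : ℝ, a < (t : EReal) → (t : EReal) < b →
      ∀ i j : Fin n, i ≠ j → 0 ≤ A t i j)
    (x : ℝ → Fin n → ℝ)
    (hx : ∀ t : ℝ, a < (t : EReal) → (t : EReal) < b →
      HasDerivAt x (A t *ᵥ x t) t)
    (ξ : ℝ → ℝ) (hξ : ξ = fun t => ∏ i, x t i) :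
    ∀ t : ℝ, a < (t : EReal) → (t : EReal) < b →
      DifferentiableAt ℝ ξ t ∧
      ((∀ i, 0 ≤ x t i) → Matrix.trace (A t) * ξ t ≤ deriv ξ t) :=
  cooperative_product_diff_ineq_general a b A hcoop x hx ξ hξ
end

section
/- Exponential lower bound for the coordinate product: Let n ≥ 1, let a < b be real numbers (possibly ±∞), let A : (a,b) → ℝ^{n×n} be continuous and cooperative (all off-diagonal entries of A(t) nonnegative for every t ∈ (a,b)), and let x : (a,b) → ℝⁿ be differentiable with x'(t) = A(t) x(t) for all t ∈ (a,b). Fix t₀ ∈ (a,b) and τ ∈ (t₀, b], and suppose that all coordinates of x(t₀) are strictly positive and that for every t ∈ [t₀, τ) all coordinates of x(t) are nonnegative. Then, writing ξ(t) := ∏_{i=1}^n x_i(t), one has ξ(t) ≥ ξ(t₀) · exp(∫_{t₀}^{t} trace(A(s)) ds) for every t ∈ [t₀, τ). -/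
open Matrix

/-!
Along the solution, `ξ' = ∑ᵢ (∏_{j ≠ i} xⱼ) (A x)ᵢ`. Cooperativity and nonnegativity of `x` give
`(A x)ᵢ ≥ Aᵢᵢ xᵢ`, hence `ξ' ≥ trace A · ξ`. This differential inequality makes
`ξ · exp (-∫ trace A)` nondecreasing, which is the claimed bound.
-/

open Set Finset

namespace Matrix

variable {ι R : Type*} [Fintype ι] [CommSemiring R] [PartialOrder R] [IsOrderedRing R]

theorem diag_mul_le_mulVec_of_nonneg {M : Matrix ι ι R} {v : ι → R}
    (hM : ∀ i j, i ≠ j → 0 ≤ M i j) (hv : ∀ i, 0 ≤ v i) (i : ι) :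
    M i i * v i ≤ (M *ᵥ v) i := by
  classical
  rw [mulVec, dotProduct, ← Finset.add_sum_erase _ _ (Finset.mem_univ i)]
  exact le_add_of_nonneg_right <| Finset.sum_nonneg fun j hj =>
    mul_nonneg (hM i j (Finset.ne_of_mem_erase hj).symm) (hv j)

theorem trace_mul_prod_le_sum_prod_erase_mul_mulVec [DecidableEq ι] {M : Matrix ι ι R}
    {v : ι → R} (hM : ∀ i j, i ≠ j → 0 ≤ M i j) (hv : ∀ i, 0 ≤ v i) :
    M.trace * ∏ i, v i ≤ ∑ i, (∏ j ∈ univ.erase i, v j) * (M *ᵥ v) i := by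
  rw [trace, Finset.sum_mul]
  refine Finset.sum_le_sum fun i _ => ?_
  calc M.diag i * ∏ j, v j = (∏ j ∈ univ.erase i, v j) * (M i i * v i) := by
        rw [← Finset.mul_prod_erase _ _ (Finset.mem_univ i), diag]
        ring
    _ ≤ (∏ j ∈ univ.erase i, v j) * (M *ᵥ v) i :=
        mul_le_mul_of_nonneg_left (diag_mul_le_mulVec_of_nonneg hM hv i)
          (Finset.prod_nonneg fun j _ => hv j)

end Matrix

theorem mul_exp_integral_le_of_mul_le_deriv {f f' c : ℝ → ℝ} {t₀ t : ℝ} (ht : t₀ ≤ t)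
    (hc : ContinuousOn c (Icc t₀ t)) (hf : ContinuousOn f (Icc t₀ t))
    (hf' : ∀ s ∈ Ioo t₀ t, HasDerivAt f (f' s) s)
    (hle : ∀ s ∈ Ioo t₀ t, c s * f s ≤ f' s) :
    f t₀ * Real.exp (∫ s in t₀..t, c s) ≤ f t := by
  set F : ℝ → ℝ := fun u => ∫ s in t₀..u, c s
  have hF : ContinuousOn F (Icc t₀ t) := by
    simpa only [uIcc_of_le ht] using
      intervalIntegral.continuousOn_primitive_interval (hc.integrableOn_Icc.mono_set
        (uIcc_of_le ht).subset)
  have hF' : ∀ s ∈ Ioo t₀ t, HasDerivAt F (c s) s := fun s hs =>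
    intervalIntegral.integral_hasDerivAt_right
      ((hc.mono (Icc_subset_Icc_right hs.2.le)).intervalIntegrable_of_Icc hs.1.le)
      ((hc.mono Ioo_subset_Icc_self).stronglyMeasurableAtFilter isOpen_Ioo s hs)
      (hc.continuousAt (Icc_mem_nhds hs.1 hs.2))
  have hmono : MonotoneOn (fun u => f u * Real.exp (-F u)) (Icc t₀ t) := by
    refine monotoneOn_of_hasDerivWithinAt_nonneg
      (f' := fun s => (f' s - c s * f s) * Real.exp (-F s))
      (convex_Icc t₀ t) (hf.mul hF.neg.rexp) (fun s hs => ?_) (fun s hs => ?_)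
    · rw [interior_Icc] at hs
      refine (((hf' s hs).mul (hF' s hs).neg.exp).congr_deriv ?_).hasDerivWithinAt
      simp only [Pi.neg_apply]
      ring
    · rw [interior_Icc] at hs
      exact mul_nonneg (sub_nonneg.2 (hle s hs)) (Real.exp_pos _).le
  have hg := hmono (left_mem_Icc.2 ht) (right_mem_Icc.2 ht) ht
  simp only [F, intervalIntegral.integral_same, neg_zero, Real.exp_zero, mul_one] at hg
  calc f t₀ * Real.exp (F t) ≤ f t * Real.exp (-F t) * Real.exp (F t) :=
        mul_le_mul_of_nonneg_right hg (Real.exp_pos _).le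
    _ = f t := by rw [mul_assoc, ← Real.exp_add, neg_add_cancel, Real.exp_zero, mul_one]

theorem cooperative_product_exp_lower_bound_general {n : ℕ} (a b : EReal)
    (A : ℝ → Matrix (Fin n) (Fin n) ℝ)
    (hAcont : ContinuousOn A {t : ℝ | a < (t : EReal) ∧ (t : EReal) < b})
    (hcoop : ∀ t : ℝ, a < (t : EReal) → (t : EReal) < b →
      ∀ i j : Fin n, i ≠ j → 0 ≤ A t i j)
    (x : ℝ → Fin n → ℝ)
    (hx : ∀ t : ℝ, a < (t : EReal) → (t : EReal) < b →
      HasDerivAt x (A t *ᵥ x t) t)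
    (t₀ : ℝ) (ht₀a : a < (t₀ : EReal))
    (τ : ℝ) (hτb : (τ : EReal) ≤ b)
    (hnn : ∀ t ∈ Set.Ico t₀ τ, ∀ i, 0 ≤ x t i)
    (ξ : ℝ → ℝ) (hξ : ξ = fun t => ∏ i, x t i) :
    ∀ t ∈ Set.Ico t₀ τ,
      ξ t₀ * Real.exp (∫ s in t₀..t, Matrix.trace (A s)) ≤ ξ t := by
  subst hξ
  rintro t ⟨ht₀t, htτ⟩
  have hdomain : Icc t₀ t ⊆ {s : ℝ | a < (s : EReal) ∧ (s : EReal) < b} := fun s hs =>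
    ⟨ht₀a.trans_le (EReal.coe_le_coe_iff.2 hs.1),
      (EReal.coe_lt_coe_iff.2 (hs.2.trans_lt htτ)).trans_le hτb⟩
  have hξ' : ∀ s ∈ Icc t₀ t, HasDerivAt (fun u => ∏ i, x u i)
      (∑ i, (∏ j ∈ univ.erase i, x s j) * (A s *ᵥ x s) i) s := fun s hs => by
    simpa only [smul_eq_mul] using HasDerivAt.fun_finsetProd fun i _ =>
      hasDerivAt_pi.1 (hx s (hdomain hs).1 (hdomain hs).2) i
  refine mul_exp_integral_le_of_mul_le_deriv ht₀t
    ((continuous_id.matrix_trace.comp_continuousOn hAcont).mono hdomain)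
    (fun s hs => (hξ' s hs).continuousAt.continuousWithinAt)
    (fun s hs => hξ' s (Ioo_subset_Icc_self hs)) (fun s hs => ?_)
  exact trace_mul_prod_le_sum_prod_erase_mul_mulVec
    (hcoop s (hdomain (Ioo_subset_Icc_self hs)).1 (hdomain (Ioo_subset_Icc_self hs)).2)
    (hnn s ⟨hs.1.le, hs.2.trans htτ⟩)

/-- Exponential lower bound for the coordinate product: for a continuous cooperative
linear system `x' = A(t) x` on an open interval `(a, b)` (with `a`, `b` possibly `±∞`,
hence taken in `EReal`), if all coordinates of `x(t₀)` are strictly positive and all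
coordinates of `x(t)` are nonnegative for every `t ∈ [t₀, τ)` (where `τ ∈ (t₀, b]`), then
the product `ξ(t) = ∏ i, xᵢ(t)` satisfies
`ξ(t) ≥ ξ(t₀) * exp (∫_{t₀}^{t} trace (A s) ds)` on `[t₀, τ)`. -/
theorem cooperative_product_exp_lower_bound {n : ℕ} (hn : 1 ≤ n) (a b : EReal) (hab : a < b)
    (A : ℝ → Matrix (Fin n) (Fin n) ℝ)
    (hAcont : ContinuousOn A {t : ℝ | a < (t : EReal) ∧ (t : EReal) < b})
    (hcoop : ∀ t : ℝ, a < (t : EReal) → (t : EReal) < b →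
      ∀ i j : Fin n, i ≠ j → 0 ≤ A t i j)
    (x : ℝ → Fin n → ℝ)
    (hx : ∀ t : ℝ, a < (t : EReal) → (t : EReal) < b →
      HasDerivAt x (A t *ᵥ x t) t)
    (t₀ : ℝ) (ht₀a : a < (t₀ : EReal)) (ht₀b : (t₀ : EReal) < b)
    (τ : ℝ) (ht₀τ : t₀ < τ) (hτb : (τ : EReal) ≤ b)
    (hpos : ∀ i, 0 < x t₀ i)
    (hnn : ∀ t ∈ Set.Ico t₀ τ, ∀ i, 0 ≤ x t i)
    (ξ : ℝ → ℝ) (hξ : ξ = fun t => ∏ i, x t i) :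
    ∀ t ∈ Set.Ico t₀ τ,
      ξ t₀ * Real.exp (∫ s in t₀..t, Matrix.trace (A s)) ≤ ξ t :=
  cooperative_product_exp_lower_bound_general a b A hAcont hcoop x hx t₀ ht₀a τ hτb hnn ξ hξ
end

section
/- Strong monotonicity for strongly cooperative systems: Let n ≥ 1, let a < b be real numbers (possibly ±∞), and let A : (a,b) → ℝ^{n×n} be a continuous matrix-valued function that is strongly cooperative, i.e. for every t ∈ (a,b) and all indices i ≠ j, the off-diagonal entry A(t)_{ij} is strictly positive. Let x : (a,b) → ℝⁿ be differentiable with x'(t) = A(t) x(t) for all t ∈ (a,b). If t₀ ∈ (a,b), every coordinate of x(t₀) is nonnegative, and x(t₀) ≠ 0, then for every t ∈ (t₀, b) every coordinate of x(t) is strictly positive. -/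
/-!
On a compact time interval, the substitution `y = e^{ct} x` replaces `A` by the entrywise
nonnegative matrix `A + c • 1`. The nonnegative orthant is forward invariant for cooperative
systems: if `C` bounds the row sums of `A`, no coordinate of `x + ε e^{(C+1)t} 1` can reach `0`
first, because its derivative there is positive; now let `ε → 0`. Once `y ≥ 0`, each coordinate
of `y` is nondecreasing, so a coordinate `j` with `x_j(t₀) > 0` stays positive, and every other
coordinate `i` is strictly increasing since its derivative is at least `A_ij y_j > 0`.
-/

open Matrix Set Filter Topology

theorem IsCompact.exists_forall_apply_le {X ι : Type*} [TopologicalSpace X] [Fintype ι]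
    {K : Set X} (hK : IsCompact K) {f : X → ι → ℝ} (hf : ContinuousOn f K) :
    ∃ C, ∀ t ∈ K, ∀ i, f t i ≤ C := by
  obtain ⟨C, hC⟩ := hK.exists_bound_of_continuousOn hf
  exact ⟨C, fun t ht i => (le_abs_self _).trans ((norm_le_pi_norm (f t) i).trans (hC t ht))⟩

namespace Matrix

variable {ι : Type*} [Fintype ι] {M : Matrix ι ι ℝ} {v : ι → ℝ} {i : ι}

theorem mulVec_apply_nonneg_of_apply_eq_zero (hM : ∀ j, j ≠ i → 0 ≤ M i j) (hv : 0 ≤ v)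
    (hvi : v i = 0) : 0 ≤ (M *ᵥ v) i := by
  refine Finset.sum_nonneg fun j _ => ?_
  rcases eq_or_ne j i with rfl | hj
  · simp [hvi]
  · exact mul_nonneg (hM j hj) (hv j)

theorem mul_le_mulVec_apply (hM : ∀ k, 0 ≤ M i k) (hv : 0 ≤ v) (j : ι) :
    M i j * v j ≤ (M *ᵥ v) i :=
  Finset.single_le_sum (f := fun k => M i k * v k) (fun k _ => mul_nonneg (hM k) (hv k))
    (Finset.mem_univ j)

end Matrix

theorem nonneg_of_hasDerivWithinAt_pos_of_apply_eq_zero {ι : Type*} [Finite ι]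
    {z z' : ℝ → ι → ℝ} {t₀ t₁ : ℝ} (hcont : ContinuousOn z (Icc t₀ t₁))
    (hz : ∀ t ∈ Ico t₀ t₁, HasDerivWithinAt z (z' t) (Ici t) t) (h₀ : 0 ≤ z t₀)
    (hboundary : ∀ t ∈ Ico t₀ t₁, 0 ≤ z t → ∀ i, z t i = 0 → 0 < z' t i) :
    ∀ t ∈ Icc t₀ t₁, 0 ≤ z t := by
  refine IsClosed.Icc_subset_of_forall_mem_nhdsWithin (s := {t | 0 ≤ z t}) ?_ h₀ ?_
  · rw [inter_comm]
    exact hcont.preimage_isClosed_of_isClosed isClosed_Icc isClosed_Ici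
  rintro t ⟨hzt, htI⟩
  refine eventually_all.2 fun i => ?_
  have hzi := hasDerivWithinAt_pi.1 (hz t htI) i
  show ∀ᶠ s in 𝓝[>] t, 0 ≤ z s i
  rcases (show 0 ≤ z t i from hzt i).eq_or_lt with hzero | hpos
  · -- a vanishing coordinate has positive right slopes, so it becomes positive
    have hslope := (hasDerivWithinAt_iff_tendsto_slope.1 hzi).eventually
      (lt_mem_nhds (hboundary t htI hzt i hzero.symm))
    rw [Ici_sdiff_left] at hslope
    filter_upwards [hslope, self_mem_nhdsWithin] with s hs hts
    rw [slope_def_field, ← hzero, sub_zero] at hs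
    exact (div_pos_iff_of_pos_right (sub_pos.2 hts)).1 hs |>.le
  · have : ∀ᶠ s in 𝓝[≥] t, 0 < z s i := hzi.continuousWithinAt.eventually (lt_mem_nhds hpos)
    exact Eventually.mono (nhdsWithin_mono _ Ioi_subset_Ici_self this) fun _ => le_of_lt

theorem hasDerivAt_exp_smul_of_hasDerivAt_mulVec {ι : Type*} [Fintype ι] [DecidableEq ι]
    {A : Matrix ι ι ℝ} {x : ℝ → ι → ℝ} {t : ℝ} (hx : HasDerivAt x (A *ᵥ x t) t) (c : ℝ) :
    HasDerivAt (fun s => Real.exp (c * s) • x s) ((A + c • 1) *ᵥ (Real.exp (c * t) • x t)) t := by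
  refine (((hasDerivAt_id t).const_mul c).exp.smul hx).congr_deriv ?_
  simp only [add_mulVec, smul_mulVec, one_mulVec, mulVec_smul, id]
  module

section Cooperative

variable {ι : Type*} [Fintype ι] {A : ℝ → Matrix ι ι ℝ} {x : ℝ → ι → ℝ} {t₀ t₁ : ℝ}

theorem nonneg_of_cooperative_of_hasDerivAt (hA : ContinuousOn A (Icc t₀ t₁))
    (hcoop : ∀ t ∈ Icc t₀ t₁, ∀ i j, j ≠ i → 0 ≤ A t i j)
    (hx : ∀ t ∈ Icc t₀ t₁, HasDerivAt x (A t *ᵥ x t) t) (h₀ : 0 ≤ x t₀) :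
    ∀ t ∈ Icc t₀ t₁, 0 ≤ x t := by
  obtain ⟨C, hC⟩ : ∃ C, ∀ t ∈ Icc t₀ t₁, ∀ i, (A t *ᵥ 1) i ≤ C :=
    isCompact_Icc.exists_forall_apply_le
      ((continuous_id.matrix_mulVec continuous_const).comp_continuousOn hA)
  have hperturbed : ∀ ε > 0, ∀ t ∈ Icc t₀ t₁,
      0 ≤ x t + (ε * Real.exp ((C + 1) * (t - t₀))) • (1 : ι → ℝ) := by
    intro ε hε
    have hz : ∀ t ∈ Icc t₀ t₁, HasDerivAt (fun s => x s + (ε * Real.exp ((C + 1) * (s - t₀))) • 1)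
        (A t *ᵥ x t + (ε * Real.exp ((C + 1) * (t - t₀)) * (C + 1)) • 1) t := fun t ht => by
      refine (hx t ht).add (HasDerivAt.smul_const ?_ 1)
      refine ((((hasDerivAt_id t).sub_const t₀).const_mul (C + 1)).exp.const_mul ε).congr_deriv ?_
      simp only [id]
      ring
    refine nonneg_of_hasDerivWithinAt_pos_of_apply_eq_zero
      (fun t ht => (hz t ht).continuousAt.continuousWithinAt)
      (fun t ht => (hz t (Ico_subset_Icc_self ht)).hasDerivWithinAt) ?_ ?_
    · simpa using h₀.trans (le_add_of_nonneg_right (smul_nonneg hε.le zero_le_one))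
    intro t ht hzt i hzi
    have htI := Ico_subset_Icc_self ht
    set e := ε * Real.exp ((C + 1) * (t - t₀))
    have hpos : 0 < e := by positivity
    have hAz := mulVec_apply_nonneg_of_apply_eq_zero (hcoop t htI i) hzt hzi
    have hsplit : A t *ᵥ x t = A t *ᵥ (x t + e • 1) - e • (A t *ᵥ 1) := by
      rw [mulVec_add, mulVec_smul]; abel
    simp only [Pi.add_apply, Pi.smul_apply, hsplit, Pi.sub_apply, Pi.one_apply, smul_eq_mul]
    nlinarith [hC t htI i]
  intro t ht i
  have hE := Real.exp_pos ((C + 1) * (t - t₀))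
  refine le_of_forall_pos_le_add fun ε hε => ?_
  simpa [div_mul_cancel₀ _ hE.ne'] using hperturbed (ε / Real.exp ((C + 1) * (t - t₀)))
    (div_pos hε hE) t ht i

theorem pos_of_hasDerivAt_of_nonneg_of_offDiag_pos (ht : t₀ < t₁)
    (hA : ∀ t ∈ Icc t₀ t₁, ∀ i j, 0 ≤ A t i j)
    (hoff : ∀ t ∈ Icc t₀ t₁, ∀ i j, j ≠ i → 0 < A t i j)
    (hx : ∀ t ∈ Icc t₀ t₁, HasDerivAt x (A t *ᵥ x t) t)
    (hnn : ∀ t ∈ Icc t₀ t₁, 0 ≤ x t) (hne : x t₀ ≠ 0) :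
    ∀ i, 0 < x t₁ i := by
  have hderiv : ∀ i, ∀ t ∈ interior (Icc t₀ t₁),
      HasDerivWithinAt (fun s => x s i) ((A t *ᵥ x t) i) (interior (Icc t₀ t₁)) t :=
    fun i t ht => (hasDerivAt_pi.1 (hx t (interior_subset ht)) i).hasDerivWithinAt
  have hcont : ∀ i, ContinuousOn (fun s => x s i) (Icc t₀ t₁) := fun i t ht =>
    (hasDerivAt_pi.1 (hx t ht) i).continuousAt.continuousWithinAt
  have hlower : ∀ t ∈ Icc t₀ t₁, ∀ i j, A t i j * x t j ≤ (A t *ᵥ x t) i :=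
    fun t ht i => mul_le_mulVec_apply (hA t ht i) (hnn t ht)
  obtain ⟨j, hj⟩ : ∃ j, 0 < x t₀ j := by
    by_contra! h
    exact hne (le_antisymm h (hnn t₀ (left_mem_Icc.2 ht.le)))
  have hxj : ∀ t ∈ Icc t₀ t₁, 0 < x t j := by
    have hmono := monotoneOn_of_hasDerivWithinAt_nonneg (convex_Icc t₀ t₁) (hcont j) (hderiv j)
      fun t ht => (mul_nonneg (hA t (interior_subset ht) j j) (hnn t (interior_subset ht) j)).trans
        (hlower t (interior_subset ht) j j)
    exact fun s hs => hj.trans_le (hmono (left_mem_Icc.2 ht.le) hs hs.1)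
  intro i
  rcases eq_or_ne i j with rfl | hij
  · exact hxj t₁ (right_mem_Icc.2 ht.le)
  have hmono := strictMonoOn_of_hasDerivWithinAt_pos (convex_Icc t₀ t₁) (hcont i) (hderiv i)
    fun t ht => (mul_pos (hoff t (interior_subset ht) i j hij.symm)
      (hxj t (interior_subset ht))).trans_le (hlower t (interior_subset ht) i j)
  exact (hnn t₀ (left_mem_Icc.2 ht.le) i).trans_lt
    (hmono (left_mem_Icc.2 ht.le) (right_mem_Icc.2 ht.le) ht)

theorem pos_of_stronglyCooperative_of_hasDerivAt [DecidableEq ι] (ht : t₀ < t₁)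
    (hA : ContinuousOn A (Icc t₀ t₁))
    (hcoop : ∀ t ∈ Icc t₀ t₁, ∀ i j, j ≠ i → 0 < A t i j)
    (hx : ∀ t ∈ Icc t₀ t₁, HasDerivAt x (A t *ᵥ x t) t) (h₀ : 0 ≤ x t₀) (hne : x t₀ ≠ 0) :
    ∀ i, 0 < x t₁ i := by
  obtain ⟨c, hc⟩ : ∃ c, ∀ t ∈ Icc t₀ t₁, ∀ i, -A t i i ≤ c :=
    isCompact_Icc.exists_forall_apply_le (continuous_matrix_diag.neg.comp_continuousOn hA)
  have hy : ∀ t ∈ Icc t₀ t₁, HasDerivAt (fun s => Real.exp (c * s) • x s)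
      ((A t + c • 1) *ᵥ (Real.exp (c * t) • x t)) t :=
    fun t ht => hasDerivAt_exp_smul_of_hasDerivAt_mulVec (hx t ht) c
  have hoff : ∀ t ∈ Icc t₀ t₁, ∀ i j, j ≠ i → 0 < (A t + c • 1) i j := fun t ht i j hji => by
    simpa [one_apply_ne' hji] using hcoop t ht i j hji
  have hnonneg : ∀ t ∈ Icc t₀ t₁, ∀ i j, 0 ≤ (A t + c • 1) i j := fun t ht i j => by
    rcases eq_or_ne j i with rfl | hji
    · simpa [neg_le_iff_add_nonneg, add_comm] using hc t ht j
    · exact (hoff t ht i j hji).le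
  have hy_nn := nonneg_of_cooperative_of_hasDerivAt (hA.add continuousOn_const)
    (fun t ht i j hji => (hoff t ht i j hji).le) hy (smul_nonneg (Real.exp_pos _).le h₀)
  intro i
  have := pos_of_hasDerivAt_of_nonneg_of_offDiag_pos ht hnonneg hoff hy hy_nn
    (smul_ne_zero (Real.exp_pos _).ne' hne) i
  simpa [Real.exp_pos] using this

end Cooperative

theorem strongly_cooperative_strong_monotonicity_general {n : ℕ}
    (a b : EReal)
    (A : ℝ → Matrix (Fin n) (Fin n) ℝ)
    (hAcont : ContinuousOn A {t : ℝ | a < (t : EReal) ∧ (t : EReal) < b})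
    (hcoop : ∀ t : ℝ, a < (t : EReal) → (t : EReal) < b →
      ∀ i j : Fin n, i ≠ j → 0 < A t i j)
    (x : ℝ → Fin n → ℝ)
    (hx : ∀ t : ℝ, a < (t : EReal) → (t : EReal) < b →
      HasDerivAt x (A t *ᵥ x t) t)
    (t₀ : ℝ) (ht₀a : a < (t₀ : EReal))
    (hnn : ∀ i, 0 ≤ x t₀ i) (hne : x t₀ ≠ 0) :
    ∀ t : ℝ, t₀ < t → (t : EReal) < b → ∀ i, 0 < x t i := by
  intro t ht₀t htb
  have hsub : ∀ s ∈ Icc t₀ t, a < (s : EReal) ∧ (s : EReal) < b := fun s hs =>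
    ⟨ht₀a.trans_le (EReal.coe_le_coe_iff.2 hs.1), (EReal.coe_le_coe_iff.2 hs.2).trans_lt htb⟩
  exact pos_of_stronglyCooperative_of_hasDerivAt ht₀t (hAcont.mono hsub)
    (fun s hs i j hji => hcoop s (hsub s hs).1 (hsub s hs).2 i j hji.symm)
    (fun s hs => hx s (hsub s hs).1 (hsub s hs).2) hnn hne

/-- Strong monotonicity for strongly cooperative systems: for a continuous strongly
cooperative linear system `x' = A(t) x` (all off-diagonal entries of `A(t)` strictly
positive) on an open interval `(a, b)` (with `a`, `b` possibly `±∞`, hence taken in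
`EReal`), if `x(t₀)` is nonnegative in every coordinate and nonzero, then all coordinates
of `x(t)` are strictly positive for every later `t` in the interval. -/
theorem strongly_cooperative_strong_monotonicity {n : ℕ} (hn : 1 ≤ n)
    (a b : EReal) (hab : a < b)
    (A : ℝ → Matrix (Fin n) (Fin n) ℝ)
    (hAcont : ContinuousOn A {t : ℝ | a < (t : EReal) ∧ (t : EReal) < b})
    (hcoop : ∀ t : ℝ, a < (t : EReal) → (t : EReal) < b →
      ∀ i j : Fin n, i ≠ j → 0 < A t i j)
    (x : ℝ → Fin n → ℝ)
    (hx : ∀ t : ℝ, a < (t : EReal) → (t : EReal) < b →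
      HasDerivAt x (A t *ᵥ x t) t)
    (t₀ : ℝ) (ht₀a : a < (t₀ : EReal)) (ht₀b : (t₀ : EReal) < b)
    (hnn : ∀ i, 0 ≤ x t₀ i) (hne : x t₀ ≠ 0) :
    ∀ t : ℝ, t₀ < t → (t : EReal) < b → ∀ i, 0 < x t i :=
  strongly_cooperative_strong_monotonicity_general a b A hAcont hcoop x hx t₀ ht₀a hnn hne
end

section
/- Carathéodory version of (M2): Let n ≥ 1, let a < b be real numbers (possibly ±∞), and let A : (a,b) → ℝ^{n×n} be a measurable, locally integrable matrix-valued function such that for almost every t ∈ (a,b) and all indices i ≠ j, the off-diagonal entry A(t)_{ij} is nonnegative. Let x : (a,b) → ℝⁿ be locally absolutely continuous with x'(t) = A(t) x(t) for almost every t ∈ (a,b). If t₀ ∈ (a,b) and every coordinate of x(t₀) is strictly positive, then for every t ∈ (t₀, b) every coordinate of x(t) is strictly positive. -/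
/-!
While the coordinates of `x` other than the `i`-th are nonnegative, cooperativity of the `i`-th
row gives `x i' ≥ A i i * x i`, and the integrating factor `exp (-∫ A i i)` turns this into
`x i τ ≥ x i t₀ * exp (∫_{t₀}^{τ} A i i) > 0`. Applied at the first time `τ` at which some
coordinate becomes nonpositive, this is a contradiction.
-/

open Matrix MeasureTheory

open Set Filter Real

theorem LipschitzOnWith.comp_absolutelyContinuousOnInterval {X Y : Type*} [PseudoMetricSpace X]
    [PseudoMetricSpace Y] {φ : X → Y} {K : NNReal} {s : Set X} {f : ℝ → X} {a b : ℝ}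
    (hφ : LipschitzOnWith K φ s) (hf : AbsolutelyContinuousOnInterval f a b)
    (hfs : MapsTo f (uIcc a b) s) : AbsolutelyContinuousOnInterval (φ ∘ f) a b := by
  unfold AbsolutelyContinuousOnInterval at hf ⊢
  refine squeeze_zero' (.of_forall fun _ ↦ Finset.sum_nonneg fun _ _ ↦ dist_nonneg) ?_
    (by simpa using hf.const_mul (K : ℝ))
  rw [eventually_inf_principal]
  filter_upwards with ⟨n, I⟩ hnI
  rw [Finset.mul_sum]
  gcongr with i hi
  exact hφ.dist_le_mul _ (hfs (hnI.1 i hi).1) _ (hfs (hnI.1 i hi).2)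

theorem LocallyLipschitz.comp_absolutelyContinuousOnInterval {E Y : Type*}
    [SeminormedAddCommGroup E] [PseudoMetricSpace Y] {φ : E → Y} {f : ℝ → E} {a b : ℝ}
    (hφ : LocallyLipschitz φ) (hf : AbsolutelyContinuousOnInterval f a b) :
    AbsolutelyContinuousOnInterval (φ ∘ f) a b := by
  obtain ⟨K, hK⟩ := LocallyLipschitzOn.exists_lipschitzOnWith_of_compact
    (isCompact_uIcc.image_of_continuousOn hf.continuousOn) hφ.locallyLipschitzOn
  exact hK.comp_absolutelyContinuousOnInterval hf (mapsTo_image f (uIcc a b))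

theorem AbsolutelyContinuousOnInterval.mul_exp_integral_le {f k : ℝ → ℝ} {a b : ℝ} (hab : a ≤ b)
    (hf : AbsolutelyContinuousOnInterval f a b) (hk : IntervalIntegrable k volume a b)
    (hfk : ∀ᵐ s, s ∈ Icc a b → k s * f s ≤ deriv f s) :
    f a * exp (∫ s in a..b, k s) ≤ f b := by
  set G : ℝ → ℝ := fun s ↦ ∫ u in a..s, k u
  set E : ℝ → ℝ := fun s ↦ exp (-G s)
  have hE : AbsolutelyContinuousOnInterval E a b :=
    (contDiff_exp.comp contDiff_neg).locallyLipschitz.comp_absolutelyContinuousOnInterval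
      (hk.absolutelyContinuousOnInterval_intervalIntegral left_mem_uIcc)
  have hE' : ∀ᵐ s, s ∈ Icc a b → deriv E s = -k s * E s := by
    filter_upwards [hk.ae_hasDerivAt_integral] with s hs hsab
    rw [uIcc_of_le hab] at hs
    exact (((hs hsab a ⟨le_rfl, hab⟩).neg).exp.deriv).trans (mul_comm _ _)
  have hparts := hf.integral_deriv_mul_eq_sub hE
  have hnonneg : 0 ≤ ∫ s in a..b, deriv f s * E s + f s * deriv E s := by
    refine intervalIntegral.integral_nonneg_of_ae_restrict hab ?_
    filter_upwards [ae_restrict_of_ae hfk, ae_restrict_of_ae hE', ae_restrict_mem measurableSet_Icc]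
      with s hfs hEs hs
    rw [hEs hs, Pi.zero_apply, show deriv f s * E s + f s * (-k s * E s)
      = E s * (deriv f s - k s * f s) by ring]
    exact mul_nonneg (exp_pos _).le (sub_nonneg.2 (hfs hs))
  simp only [E, G, intervalIntegral.integral_same, neg_zero, exp_zero, mul_one] at hparts
  calc f a * exp (∫ s in a..b, k s)
      ≤ f b * exp (-∫ s in a..b, k s) * exp (∫ s in a..b, k s) := by gcongr; linarith
    _ = f b := by rw [mul_assoc, ← exp_add, neg_add_cancel, exp_zero, mul_one]

theorem Matrix.mul_le_mulVec_apply_of_nonneg_off_diag {ι R : Type*} [Fintype ι] [Semiring R]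
    [PartialOrder R] [IsOrderedRing R] {M : Matrix ι ι R} {v : ι → R} {i : ι}
    (hM : ∀ j, j ≠ i → 0 ≤ M i j) (hv : ∀ j, j ≠ i → 0 ≤ v j) : M i i * v i ≤ (M *ᵥ v) i := by
  classical
  rw [mulVec, dotProduct, ← Finset.add_sum_erase _ _ (Finset.mem_univ i)]
  exact le_add_of_nonneg_right <| Finset.sum_nonneg fun j hj ↦
    mul_nonneg (hM j (Finset.ne_of_mem_erase hj)) (hv j (Finset.ne_of_mem_erase hj))

theorem MeasureTheory.IntegrableOn.mulVec_of_continuousOn {X ι : Type*} [MeasurableSpace X]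
    [TopologicalSpace X] [OpensMeasurableSpace X] [T2Space X] {μ : Measure X} [Fintype ι]
    {K : Set X} {A : X → Matrix ι ι ℝ} {x : X → ι → ℝ} (hA : ∀ i j, IntegrableOn (fun t ↦ A t i j) K μ)
    (hx : ContinuousOn x K) (hK : IsCompact K) : IntegrableOn (fun t ↦ A t *ᵥ x t) K μ :=
  Integrable.of_eval fun i ↦ integrable_finsetSum _ fun j _ ↦
    (hA i j).mul_continuousOn ((continuous_apply j).comp_continuousOn hx) hK

theorem exists_first_nonpos_coord {ι : Type*} [Finite ι] {y : ℝ → ι → ℝ} {p q : ℝ} (hpq : p ≤ q)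
    (hy : ContinuousOn y (Icc p q)) (hp : ∀ i, 0 < y p i) (hq : ∃ i, y q i ≤ 0) :
    ∃ τ ∈ Ioc p q, (∃ i, y τ i ≤ 0) ∧ ∀ s ∈ Ico p τ, ∀ i, 0 < y s i := by
  set B := {s ∈ Icc p q | ∃ i, y s i ≤ 0}
  have hB : IsClosed B := by
    have : B = ⋃ i, Icc p q ∩ (fun s ↦ y s i) ⁻¹' Iic 0 := by ext; simp [B, ← exists_and_left]
    rw [this]
    exact isClosed_iUnion_of_finite fun i ↦
      ((continuous_apply i).comp_continuousOn hy).preimage_isClosed_of_isClosed isClosed_Icc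
        isClosed_Iic
  have hBbdd : BddBelow B := ⟨p, fun s hs ↦ hs.1.1⟩
  obtain ⟨⟨hpτ, hτq⟩, i, hi⟩ : sInf B ∈ B := hB.csInf_mem ⟨q, ⟨hpq, le_rfl⟩, hq⟩ hBbdd
  refine ⟨sInf B, ⟨lt_of_le_of_ne hpτ ?_, hτq⟩, ⟨i, hi⟩, fun s hs j ↦ ?_⟩
  · rintro hpτ
    exact (hp i).not_ge (hpτ ▸ hi)
  · by_contra! hj
    exact notMem_of_lt_csInf hs.2 hBbdd ⟨⟨hs.1, hs.2.le.trans hτq⟩, j, hj⟩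

theorem mul_exp_integral_diag_le_of_cooperative_row {ι : Type*} [Fintype ι]
    {A : ℝ → Matrix ι ι ℝ} {x : ℝ → ι → ℝ} {p q : ℝ} (hpq : p ≤ q)
    (hA : ∀ i j, IntegrableOn (fun t ↦ A t i j) (Icc p q)) (hx : ContinuousOn x (Icc p q))
    (hsol : ∀ s ∈ Icc p q, x s = x p + ∫ u in p..s, A u *ᵥ x u)
    (i : ι) (hcoop : ∀ᵐ s, s ∈ Icc p q → ∀ j, j ≠ i → 0 ≤ A s i j)
    (hnn : ∀ᵐ s, s ∈ Icc p q → ∀ j, j ≠ i → 0 ≤ x s j) :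
    x p i * exp (∫ s in p..q, A s i i) ≤ x q i := by
  have hvec := IntegrableOn.mulVec_of_continuousOn hA hx isCompact_Icc
  have hcoord : ∀ s ∈ Icc p q, x s i = x p i + ∫ u in p..s, (A u *ᵥ x u) i := fun s hs ↦ by
    rw [hsol s hs]
    exact congrArg (x p i + ·) ((ContinuousLinearMap.proj (R := ℝ) (φ := fun _ : ι ↦ ℝ) i)
      |>.intervalIntegral_comp_comm
        (hvec.mono_set (uIcc_subset_Icc ⟨le_rfl, hpq⟩ hs)).intervalIntegrable).symm
  set F : ℝ → ℝ := fun s ↦ x p i + ∫ u in p..s, (A u *ᵥ x u) i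
  have hgi : IntervalIntegrable (fun u ↦ (A u *ᵥ x u) i) volume p q :=
    (intervalIntegrable_iff_integrableOn_Icc_of_le hpq).2 (hvec.eval i)
  have hF : AbsolutelyContinuousOnInterval F p q :=
    (LipschitzWith.const (x p i)).lipschitzOnWith.absolutelyContinuousOnInterval.fun_add
      (hgi.absolutelyContinuousOnInterval_intervalIntegral left_mem_uIcc)
  have hFk : ∀ᵐ s, s ∈ Icc p q → A s i i * F s ≤ deriv F s := by
    filter_upwards [hgi.ae_hasDerivAt_integral, hcoop, hnn] with s hderiv hAs hxs hs
    rw [uIcc_of_le hpq] at hderiv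
    rw [((hderiv hs p ⟨le_rfl, hpq⟩).const_add (x p i)).deriv, show F s = x s i from
      (hcoord s hs).symm]
    exact mul_le_mulVec_apply_of_nonneg_off_diag (hAs hs) (hxs hs)
  calc x p i * exp (∫ s in p..q, A s i i) = F p * exp (∫ s in p..q, A s i i) := by simp [F]
    _ ≤ F q := hF.mul_exp_integral_le hpq
      ((intervalIntegrable_iff_integrableOn_Icc_of_le hpq).2 (hA i i)) hFk
    _ = x q i := (hcoord q ⟨hpq, le_rfl⟩).symm

theorem caratheodory_cooperative_M2_general {n : ℕ} (a b : EReal)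
    (A : ℝ → Matrix (Fin n) (Fin n) ℝ)
    (hAint : ∀ c d : ℝ, a < (c : EReal) → (d : EReal) < b → c ≤ d →
      ∀ i j : Fin n, IntegrableOn (fun t => A t i j) (Set.Icc c d))
    (hcoop : ∀ᵐ t : ℝ, a < (t : EReal) → (t : EReal) < b →
      ∀ i j : Fin n, i ≠ j → 0 ≤ A t i j)
    (x : ℝ → Fin n → ℝ)
    (hxcont : ContinuousOn x {t : ℝ | a < (t : EReal) ∧ (t : EReal) < b})
    (hxsol : ∀ t₁ t₂ : ℝ, a < (t₁ : EReal) → (t₁ : EReal) < b →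
      a < (t₂ : EReal) → (t₂ : EReal) < b →
      x t₂ = x t₁ + ∫ s in t₁..t₂, A s *ᵥ x s)
    (t₀ : ℝ) (ht₀a : a < (t₀ : EReal)) (ht₀b : (t₀ : EReal) < b)
    (hpos : ∀ i, 0 < x t₀ i) :
    ∀ t : ℝ, t₀ < t → (t : EReal) < b → ∀ i, 0 < x t i := by
  intro t ht₀t htb
  have hmem : ∀ s ∈ Icc t₀ t, a < (s : EReal) ∧ (s : EReal) < b := fun s hs ↦
    ⟨ht₀a.trans_le (EReal.coe_le_coe hs.1), (EReal.coe_le_coe hs.2).trans_lt htb⟩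
  have hxc : ContinuousOn x (Icc t₀ t) := hxcont.mono hmem
  by_contra! hneg
  obtain ⟨τ, ⟨ht₀τ, hτt⟩, ⟨i, hi⟩, hbefore⟩ := exists_first_nonpos_coord ht₀t.le hxc hpos hneg
  have hsub : Icc t₀ τ ⊆ Icc t₀ t := Icc_subset_Icc_right hτt
  have hrow : ∀ᵐ s, s ∈ Icc t₀ τ → ∀ j, j ≠ i → 0 ≤ A s i j := by
    filter_upwards [hcoop] with s hs hsτ j hj
    exact hs (hmem s (hsub hsτ)).1 (hmem s (hsub hsτ)).2 i j hj.symm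
  have hnonneg : ∀ᵐ s, s ∈ Icc t₀ τ → ∀ j, j ≠ i → 0 ≤ x s j := by
    filter_upwards [volume.ae_ne τ] with s hs hsτ j _
    exact (hbefore s ⟨hsτ.1, lt_of_le_of_ne hsτ.2 hs⟩ j).le
  have hgrowth := mul_exp_integral_diag_le_of_cooperative_row ht₀τ.le
    (fun i j ↦ (hAint t₀ t ht₀a htb ht₀t.le i j).mono_set hsub) (hxc.mono hsub)
    (fun s hs ↦ hxsol t₀ s ht₀a ht₀b (hmem s (hsub hs)).1 (hmem s (hsub hs)).2) i hrow hnonneg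
  exact hi.not_gt ((mul_pos (hpos i) (exp_pos _)).trans_le hgrowth)

/-- Carathéodory version of (M2): let `A` be a measurable matrix-valued function on the
open interval `(a, b)` (with `a`, `b` possibly `±∞`, hence taken in `EReal`) whose entries
are integrable on every compact subinterval of `(a, b)`, and whose off-diagonal entries
are nonnegative for almost every `t ∈ (a, b)`.  A locally absolutely continuous function
`x` satisfying `x' = A(t) x` almost everywhere is encoded, equivalently, as a continuous
function satisfying the integral identity `x(t₂) = x(t₁) + ∫_{t₁}^{t₂} A(s) x(s) ds` for
all `t₁, t₂` in the interval (this is the standard characterization of Carathéodory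
solutions, since Mathlib has no predicate for absolutely continuous functions).  If all
coordinates of `x(t₀)` are strictly positive, then all coordinates of `x(t)` are strictly
positive for every later `t` in the interval. -/
theorem caratheodory_cooperative_M2 {n : ℕ} (hn : 1 ≤ n) (a b : EReal) (hab : a < b)
    (A : ℝ → Matrix (Fin n) (Fin n) ℝ)
    (hAmeas : ∀ i j : Fin n, Measurable fun t => A t i j)
    (hAint : ∀ c d : ℝ, a < (c : EReal) → (d : EReal) < b → c ≤ d →
      ∀ i j : Fin n, IntegrableOn (fun t => A t i j) (Set.Icc c d))
    (hcoop : ∀ᵐ t : ℝ, a < (t : EReal) → (t : EReal) < b →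
      ∀ i j : Fin n, i ≠ j → 0 ≤ A t i j)
    (x : ℝ → Fin n → ℝ)
    (hxcont : ContinuousOn x {t : ℝ | a < (t : EReal) ∧ (t : EReal) < b})
    (hxsol : ∀ t₁ t₂ : ℝ, a < (t₁ : EReal) → (t₁ : EReal) < b →
      a < (t₂ : EReal) → (t₂ : EReal) < b →
      x t₂ = x t₁ + ∫ s in t₁..t₂, A s *ᵥ x s)
    (t₀ : ℝ) (ht₀a : a < (t₀ : EReal)) (ht₀b : (t₀ : EReal) < b)
    (hpos : ∀ i, 0 < x t₀ i) :
    ∀ t : ℝ, t₀ < t → (t : EReal) < b → ∀ i, 0 < x t i :=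
  caratheodory_cooperative_M2_general a b A hAint hcoop x hxcont hxsol t₀ ht₀a ht₀b hpos
end
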